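/- Type-AI Cartan decomposition of su(2^p) from the rank-zero quotient algebra partition: for every p ≥ 1, define the ℝ-subspaces of 2^p × 2^p complex matrices 𝔱 := span_ℝ{ i·(−i)^{ν(ζ,α)}·S^ζ_α : ζ·α = 1 in ZMod 2 } and 𝔭 := span_ℝ{ i·(−i)^{ν(ζ,α)}·S^ζ_α : ζ·α = 0 in ZMod 2 and (ζ,α) ≠ (0,0) }. Then: (1) [𝔱, 𝔱] ⊆ 𝔱; (2) [𝔱, 𝔭] ⊆ 𝔭; (3) [𝔭, 𝔭] ⊆ 𝔱; (4) for all X ∈ 𝔱 and Y ∈ 𝔭, the trace of X*Y is 0; here [A,B] := A*B − B*A. -/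

import Mathlib

open Matrix

/-- `Z₂^p`, the binary strings of length `p`. -/
abbrev Z2 (p : ℕ) : Type := Fin p → ZMod 2

/-- Inner product of two binary strings, valued in `ZMod 2`. -/
def dotp {p : ℕ} (ζ γ : Z2 p) : ZMod 2 := ∑ i, ζ i * γ i

/-- `(-1)^x` for `x : ZMod 2`, as a complex number. -/
noncomputable def sgn (x : ZMod 2) : ℂ := if x = 0 then 1 else -1

/-- The spinor `S^ζ_α`: the `2^p × 2^p` complex matrix with `(γ, β)` entry
`(-1)^{ζ·γ}` if `γ = β + α` and `0` otherwise. -/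
noncomputable def Spinor {p : ℕ} (ζ α : Z2 p) : Matrix (Z2 p) (Z2 p) ℂ :=
  Matrix.of fun γ β => if γ = β + α then sgn (dotp ζ γ) else 0

/-- `ν(ζ,α)`: the number of indices `i` with `ζ i = 1` and `α i = 1`. -/
def nu {p : ℕ} (ζ α : Z2 p) : ℕ :=
  (Finset.univ.filter fun i => ζ i = 1 ∧ α i = 1).card

/-- The subalgebra `𝔱`: real span of the skew-Hermitian spinors `i (-i)^{ν(ζ,α)} S^ζ_α`
with `ζ·α = 1`. -/
noncomputable def frakT (p : ℕ) : Submodule ℝ (Matrix (Z2 p) (Z2 p) ℂ) :=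
  Submodule.span ℝ
    {M | ∃ ζ α : Z2 p, dotp ζ α = 1 ∧
      M = Complex.I • ((-Complex.I) ^ nu ζ α • Spinor ζ α)}

/-- The subset `𝔭`: real span of the skew-Hermitian spinors `i (-i)^{ν(ζ,α)} S^ζ_α`
with `ζ·α = 0` and `(ζ,α) ≠ (0,0)`. -/
noncomputable def frakP (p : ℕ) : Submodule ℝ (Matrix (Z2 p) (Z2 p) ℂ) :=
  Submodule.span ℝ
    {M | ∃ ζ α : Z2 p, dotp ζ α = 0 ∧ (ζ, α) ≠ (0, 0) ∧
      M = Complex.I • ((-Complex.I) ^ nu ζ α • Spinor ζ α)}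

/-!
The elements `G(ζ,α) = i (-i)^ν(ζ,α) S^ζ_α` multiply like the spinors, and spinors multiply as
`S^ζ_α S^η_β = (-1)^(η·α) S^(ζ+η)_(α+β)`. Hence the commutator `[G(ζ,α), G(η,β)]` vanishes when
`η·α = ζ·β`; otherwise it is a real multiple of `G(ζ+η, α+β)` (the phase is real because
`ν(ζ,α) + ν(η,β) + ν(ζ+η,α+β)` is odd), and `(ζ+η)·(α+β) = ζ·α + η·β + 1` decides whether it lies
in `𝔱` or in `𝔭`. For the trace, `S^ζ_α` is traceless unless `(ζ,α) = (0,0)`: off the diagonal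
when `α ≠ 0`, and a sum of a nontrivial character when `α = 0`. Bilinearity carries everything
from generators to spans.
-/

open Complex

lemma ZMod.eq_zero_or_eq_one_of_two (x : ZMod 2) : x = 0 ∨ x = 1 := by decide +revert

lemma sgn_zero : sgn 0 = 1 := if_pos rfl

lemma sgn_one : sgn 1 = -1 := if_neg one_ne_zero

lemma sgn_add (x y : ZMod 2) : sgn (x + y) = sgn x * sgn y := by
  obtain rfl | rfl := x.eq_zero_or_eq_one_of_two <;>
    obtain rfl | rfl := y.eq_zero_or_eq_one_of_two <;>
    simp [sgn_zero, sgn_one, ZModModule.add_self]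

lemma exists_sgn_sub_sgn_eq_ofReal {x y : ZMod 2} (h : x ≠ y) :
    ∃ s : ℝ, sgn x - sgn y = s := by
  obtain rfl | rfl := x.eq_zero_or_eq_one_of_two <;>
    obtain rfl | rfl := y.eq_zero_or_eq_one_of_two
  · exact absurd rfl h
  · exact ⟨2, by norm_num [sgn_zero, sgn_one]⟩
  · exact ⟨-2, by norm_num [sgn_zero, sgn_one]⟩
  · exact absurd rfl h

lemma exists_neg_I_pow_eq_ofReal_mul {m k : ℕ} (h : Odd (m + k)) :
    ∃ r : ℝ, (-I) ^ m = r * (I * (-I) ^ k) := by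
  obtain ⟨j, hj⟩ := h
  have hI : I ^ (m + k) = (-1) ^ j * I := by rw [hj, pow_succ, pow_mul, I_sq]
  refine ⟨(-1) ^ (m + j), ?_⟩
  calc (-I) ^ m = (-I) ^ m * (I * -I) ^ k := by simp
    _ = (-1) ^ m * I ^ (m + k) * (-I) ^ k := by rw [neg_pow, pow_add, mul_pow]; ring
    _ = _ := by rw [hI]; push_cast; ring

lemma Submodule.apply_mem_of_mem_span {R M N P : Type*} [CommSemiring R] [AddCommMonoid M]
    [AddCommMonoid N] [AddCommMonoid P] [Module R M] [Module R N] [Module R P]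
    (f : M →ₗ[R] N →ₗ[R] P) {s : Set M} {t : Set N} {U : Submodule R P}
    (h : ∀ x ∈ s, ∀ y ∈ t, f x y ∈ U) {x : M} {y : N} (hx : x ∈ span R s) (hy : y ∈ span R t) :
    f x y ∈ U := by
  have : map₂ f (span R s) (span R t) ≤ U := by
    rw [map₂_span_span, span_le]
    rintro _ ⟨a, ha, b, hb, rfl⟩
    exact h a ha b hb
  exact this (apply_mem_map₂ f hx hy)

lemma commutator_mem_of_mem_span {R A : Type*} [CommSemiring R] [Ring A] [Algebra R A]
    {s t : Set A} {U : Submodule R A} (h : ∀ x ∈ s, ∀ y ∈ t, x * y - y * x ∈ U) :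
    ∀ X ∈ Submodule.span R s, ∀ Y ∈ Submodule.span R t, X * Y - Y * X ∈ U := fun _ hX _ hY =>
  Submodule.apply_mem_of_mem_span (LinearMap.mul R A - (LinearMap.mul R A).flip) h hX hY

lemma Matrix.trace_mul_eq_zero_of_mem_span {n R α : Type*} [Fintype n] [DecidableEq n]
    [CommSemiring R] [Semiring α] [Algebra R α] {s t : Set (Matrix n n α)}
    (h : ∀ x ∈ s, ∀ y ∈ t, (x * y).trace = 0) :
    ∀ X ∈ Submodule.span R s, ∀ Y ∈ Submodule.span R t, (X * Y).trace = 0 := fun _ hX _ hY =>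
  Submodule.apply_mem_of_mem_span (U := ⊥)
    ((LinearMap.mul R (Matrix n n α)).compr₂ (Matrix.traceLinearMap n R α)) h hX hY

variable {p : ℕ}

lemma dotp_eq_dotProduct (ζ γ : Z2 p) : dotp ζ γ = ζ ⬝ᵥ γ := rfl

lemma dotp_add_left (ζ η γ : Z2 p) : dotp (ζ + η) γ = dotp ζ γ + dotp η γ := add_dotProduct ζ η γ

lemma dotp_add_right (ζ γ δ : Z2 p) : dotp ζ (γ + δ) = dotp ζ γ + dotp ζ δ := dotProduct_add ζ γ δ

lemma natCast_nu (ζ α : Z2 p) : (nu ζ α : ZMod 2) = dotp ζ α := by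
  rw [nu, Finset.natCast_card_filter, dotp]
  refine Finset.sum_congr rfl fun i _ => ?_
  obtain h | h := (ζ i).eq_zero_or_eq_one_of_two <;>
    obtain h' | h' := (α i).eq_zero_or_eq_one_of_two <;> simp [h, h']

noncomputable def dotpChar (ζ : Z2 p) : AddChar (Z2 p) ℂ where
  toFun γ := sgn (dotp ζ γ)
  map_zero_eq_one' := by rw [dotp_eq_dotProduct, dotProduct_zero, sgn_zero]
  map_add_eq_mul' γ δ := by rw [dotp_add_right, sgn_add]

lemma sum_sgn_dotp_eq_zero {ζ : Z2 p} (hζ : ζ ≠ 0) : ∑ γ, sgn (dotp ζ γ) = 0 := by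
  obtain ⟨j, hj⟩ := Function.ne_iff.1 hζ
  refine AddChar.sum_eq_zero_of_ne_one (ψ := dotpChar ζ)
    (AddChar.ne_one_iff.2 ⟨Pi.single j 1, ?_⟩)
  have : ζ j = 1 := (ζ j).eq_zero_or_eq_one_of_two.resolve_left hj
  show sgn (dotp ζ (Pi.single j 1)) ≠ 1
  rw [dotp_eq_dotProduct, dotProduct_single, mul_one, this, sgn_one]
  norm_num

lemma spinor_mul_spinor (ζ α η β : Z2 p) :
    Spinor ζ α * Spinor η β = sgn (dotp η α) • Spinor (ζ + η) (α + β) := by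
  ext γ δ
  simp only [Matrix.mul_apply, Spinor, Matrix.of_apply, Matrix.smul_apply, smul_eq_mul,
    mul_ite, mul_zero, Finset.sum_ite_eq', Finset.mem_univ, if_true]
  rw [add_assoc, add_comm β α]
  split_ifs with h
  · have hδβ : δ + β = γ + α := by
      rw [h, ← add_assoc, add_right_comm δ α β, add_assoc, ZModModule.add_self, add_zero]
    rw [hδβ, dotp_add_left, dotp_add_right, sgn_add, sgn_add]
    ring
  · rw [zero_mul]

lemma trace_spinor_of_ne_zero {ζ α : Z2 p} (h : (ζ, α) ≠ (0, 0)) : (Spinor ζ α).trace = 0 := by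
  by_cases hα : α = 0
  · subst hα
    have hζ : ζ ≠ 0 := fun hζ => h (by rw [hζ])
    simpa [Matrix.trace, Spinor] using sum_sgn_dotp_eq_zero hζ
  · simp [Matrix.trace, Spinor, hα]

lemma pair_add_ne_zero_of_ne {ζ α η β : Z2 p} (h : (ζ, α) ≠ (η, β)) : (ζ + η, α + β) ≠ (0, 0) := by
  rwa [← Prod.mk_add_mk, Prod.mk_zero_zero, Ne, add_eq_zero_iff_eq_neg, ZModModule.neg_eq_self]

lemma dotp_add_add_of_ne {ζ α η β : Z2 p} (h : dotp η α ≠ dotp ζ β) :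
    dotp (ζ + η) (α + β) = dotp ζ α + dotp η β + 1 := by
  have hsum : dotp η α + dotp ζ β = 1 := by
    obtain h₁ | h₁ := (dotp η α).eq_zero_or_eq_one_of_two <;>
      obtain h₂ | h₂ := (dotp ζ β).eq_zero_or_eq_one_of_two <;> simp_all
  rw [dotp_add_left, dotp_add_right, dotp_add_right, ← hsum]
  ring

lemma odd_nu_add_nu_add_nu {ζ α η β : Z2 p} (h : dotp η α ≠ dotp ζ β) :
    Odd (nu ζ α + nu η β + nu (ζ + η) (α + β)) := by
  rw [← ZMod.natCast_eq_one_iff_odd]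
  push_cast [natCast_nu, dotp_add_add_of_ne h]
  rw [← add_assoc, ZModModule.add_self, zero_add]

noncomputable def skewSpinor (ζ α : Z2 p) : Matrix (Z2 p) (Z2 p) ℂ :=
  I • ((-I) ^ nu ζ α • Spinor ζ α)

lemma skewSpinor_mul_skewSpinor (ζ α η β : Z2 p) :
    skewSpinor ζ α * skewSpinor η β =
      (I * (-I) ^ nu ζ α * (I * (-I) ^ nu η β) * sgn (dotp η α)) • Spinor (ζ + η) (α + β) := by
  simp only [skewSpinor, smul_mul_smul, spinor_mul_spinor, smul_smul]

lemma commutator_skewSpinor (ζ α η β : Z2 p) :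
    skewSpinor ζ α * skewSpinor η β - skewSpinor η β * skewSpinor ζ α =
      (I * (-I) ^ nu ζ α * (I * (-I) ^ nu η β) * (sgn (dotp η α) - sgn (dotp ζ β))) •
        Spinor (ζ + η) (α + β) := by
  rw [skewSpinor_mul_skewSpinor, skewSpinor_mul_skewSpinor, add_comm η, add_comm β, ← sub_smul]
  ring_nf

lemma exists_commutator_skewSpinor_eq_smul {ζ α η β : Z2 p} (h : dotp η α ≠ dotp ζ β) :
    ∃ r : ℝ, skewSpinor ζ α * skewSpinor η β - skewSpinor η β * skewSpinor ζ α =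
      r • skewSpinor (ζ + η) (α + β) := by
  obtain ⟨s, hs⟩ := exists_sgn_sub_sgn_eq_ofReal h
  obtain ⟨r, hr⟩ := exists_neg_I_pow_eq_ofReal_mul (odd_nu_add_nu_add_nu h)
  refine ⟨-(r * s), ?_⟩
  rw [commutator_skewSpinor, hs, skewSpinor, smul_smul, ← Complex.coe_smul, smul_smul]
  congr 1
  push_cast
  linear_combination (I ^ 2 * s) * hr + (r * s * I * (-I) ^ nu (ζ + η) (α + β)) * I_sq

lemma commutator_skewSpinor_mem {S : Submodule ℝ (Matrix (Z2 p) (Z2 p) ℂ)} (ζ α η β : Z2 p)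
    (h : dotp η α ≠ dotp ζ β → skewSpinor (ζ + η) (α + β) ∈ S) :
    skewSpinor ζ α * skewSpinor η β - skewSpinor η β * skewSpinor ζ α ∈ S := by
  by_cases hne : dotp η α = dotp ζ β
  · rw [commutator_skewSpinor, hne, sub_self, mul_zero, zero_smul]
    exact S.zero_mem
  · obtain ⟨r, hr⟩ := exists_commutator_skewSpinor_eq_smul hne
    rw [hr]
    exact S.smul_mem r (h hne)

lemma trace_skewSpinor_mul_skewSpinor {ζ α η β : Z2 p} (h : (ζ, α) ≠ (η, β)) :
    (skewSpinor ζ α * skewSpinor η β).trace = 0 := by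
  rw [skewSpinor_mul_skewSpinor, trace_smul,
    trace_spinor_of_ne_zero (pair_add_ne_zero_of_ne h), smul_zero]

theorem cartan_decomposition_AI_general {p : ℕ} :
    (∀ X ∈ frakT p, ∀ Y ∈ frakT p, X * Y - Y * X ∈ frakT p) ∧
    (∀ X ∈ frakT p, ∀ Y ∈ frakP p, X * Y - Y * X ∈ frakP p) ∧
    (∀ X ∈ frakP p, ∀ Y ∈ frakP p, X * Y - Y * X ∈ frakT p) ∧
    (∀ X ∈ frakT p, ∀ Y ∈ frakP p, (X * Y).trace = 0) := by
  refine ⟨commutator_mem_of_mem_span ?_, commutator_mem_of_mem_span ?_,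
    commutator_mem_of_mem_span ?_, Matrix.trace_mul_eq_zero_of_mem_span ?_⟩
  · rintro _ ⟨ζ, α, hζα, rfl⟩ _ ⟨η, β, hηβ, rfl⟩
    refine commutator_skewSpinor_mem ζ α η β fun hne => Submodule.subset_span ⟨_, _, ?_, rfl⟩
    rw [dotp_add_add_of_ne hne, hζα, hηβ]
    decide
  · rintro _ ⟨ζ, α, hζα, rfl⟩ _ ⟨η, β, hηβ, -, rfl⟩
    refine commutator_skewSpinor_mem ζ α η β fun hne => Submodule.subset_span ⟨_, _, ?_, ?_, rfl⟩
    · rw [dotp_add_add_of_ne hne, hζα, hηβ]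
      decide
    · exact pair_add_ne_zero_of_ne (by rintro ⟨⟩; exact hne rfl)
  · rintro _ ⟨ζ, α, hζα, -, rfl⟩ _ ⟨η, β, hηβ, -, rfl⟩
    refine commutator_skewSpinor_mem ζ α η β fun hne => Submodule.subset_span ⟨_, _, ?_, rfl⟩
    rw [dotp_add_add_of_ne hne, hζα, hηβ]
    decide
  · rintro _ ⟨ζ, α, hζα, rfl⟩ _ ⟨η, β, hηβ, -, rfl⟩
    refine trace_skewSpinor_mul_skewSpinor ?_
    rintro ⟨⟩
    exact one_ne_zero (hζα.symm.trans hηβ)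

/-- Type-AI Cartan decomposition of `su(2^p)` from the rank-zero quotient algebra partition:
`[𝔱,𝔱] ⊆ 𝔱`, `[𝔱,𝔭] ⊆ 𝔭`, `[𝔭,𝔭] ⊆ 𝔱` and `Tr(𝔱𝔭) = 0`. -/
theorem cartan_decomposition_AI {p : ℕ} (hp : 1 ≤ p) :
    (∀ X ∈ frakT p, ∀ Y ∈ frakT p, X * Y - Y * X ∈ frakT p) ∧
    (∀ X ∈ frakT p, ∀ Y ∈ frakP p, X * Y - Y * X ∈ frakP p) ∧
    (∀ X ∈ frakP p, ∀ Y ∈ frakP p, X * Y - Y * X ∈ frakT p) ∧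
    (∀ X ∈ frakT p, ∀ Y ∈ frakP p, (X * Y).trace = 0) :=
  cartan_decomposition_AI_general
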